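/- arXiv:1001.0318 — 5 statements merged into one kernel-verified Lean document; each statement's English description precedes it below -/
import Mathlib

section
/- If a locally finite Borel measure μ on ℝⁿ satisfies a power law with exponent δ > n−1 (i.e., c₁ρ^δ ≤ μ(B(x,ρ)) ≤ c₂ρ^δ for all x ∈ supp μ and 0 < ρ < ρ₀), then μ is (C, δ−n+1)-absolutely decaying for some constant C > 0. -/
open MeasureTheory Metric Set Filter RealInnerProductSpace

/-- The (topological) support of a measure on `ℝⁿ`. -/
def measSupport {n : ℕ} (μ : Measure (EuclideanSpace ℝ (Fin n))) :
    Set (EuclideanSpace ℝ (Fin n)) :=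
  {x | ∀ ρ : ℝ, 0 < ρ → 0 < μ (ball x ρ)}

/-- An affine hyperplane in `ℝⁿ`. -/
def IsAffineHyperplane {n : ℕ} (L : Set (EuclideanSpace ℝ (Fin n))) : Prop :=
  ∃ (u : EuclideanSpace ℝ (Fin n)) (b : ℝ), u ≠ 0 ∧ L = {x | ⟪u, x⟫ = b}

/-- `μ` is `(C,γ)`-absolutely decaying with threshold `ρ₀`. -/
def AbsolutelyDecaying {n : ℕ} (μ : Measure (EuclideanSpace ℝ (Fin n)))
    (C γ ρ₀ : ℝ) : Prop :=
  ∀ L : Set (EuclideanSpace ℝ (Fin n)), IsAffineHyperplane L →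
    ∀ x ∈ measSupport μ, ∀ ρ : ℝ, 0 < ρ → ρ < ρ₀ → ∀ ε : ℝ, 0 < ε →
      μ (closedBall x ρ ∩ cthickening ε L) <
        ENNReal.ofReal (C * (ε / ρ) ^ γ) * μ (closedBall x ρ)

open scoped ENNReal NNReal

/-!
Let `T = supp μ ∩ B(x, ρ) ∩ L^(ε)`. A minimal cover of `T` by closed `ε`-balls centred in `T`
has at most as many balls as a maximal `ε`-separated subset of `T`; the `ε/2`-balls around such
a subset are disjoint and lie in a slab of width `4ε` around `L` cut by a ball of radius `2ρ`,
whose volume is at most `4ε (4ρ)^(n-1)`. Hence there are `≲ (ρ/ε)^(n-1)` balls, each of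
`μ`-measure at most `c₂ ε^δ`, and `ε^δ (ρ/ε)^(n-1) = (ε/ρ)^(δ-n+1) ρ^δ`, which is at most
`c₁⁻¹ (ε/ρ)^(δ-n+1) μ(B(x, ρ))`. For `ε ≥ ρ` the estimate is trivial because
`(ε/ρ)^(δ-n+1) ≥ 1`.
-/

section Slab

variable {E : Type*} [NormedAddCommGroup E] [InnerProductSpace ℝ E] {u : E}

lemma abs_inner_sub_inner_le_dist (hu : ‖u‖ = 1) (y z : E) : |⟪u, y⟫ - ⟪u, z⟫| ≤ dist y z := by
  rw [← inner_sub_right, dist_eq_norm]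
  simpa [hu] using abs_real_inner_le_norm u (y - z)

lemma cthickening_setOf_inner_eq_subset (hu : ‖u‖ = 1) (b : ℝ) {ε : ℝ} (hε : 0 ≤ ε) :
    cthickening ε {x | ⟪u, x⟫ = b} ⊆ {y | |⟪u, y⟫ - b| ≤ ε} := by
  intro y hy
  refine (ENNReal.ofReal_le_ofReal_iff hε).1 (le_trans ?_ (mem_cthickening_iff.1 hy))
  refine le_infEDist.2 fun z hz => ?_
  rw [edist_dist, ← hz.out]
  exact ENNReal.ofReal_le_ofReal (abs_inner_sub_inner_le_dist hu y z)

lemma thickening_slab_inter_closedBall_subset (hu : ‖u‖ = 1) (b a : ℝ) (x : E) (ρ r : ℝ) :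
    thickening r ({y | |⟪u, y⟫ - b| ≤ a} ∩ closedBall x ρ) ⊆
      {y | |⟪u, y⟫ - b| ≤ a + r} ∩ closedBall x (ρ + r) := by
  intro z hz
  obtain ⟨y, ⟨hya, hyx⟩, hzy⟩ := mem_thickening_iff.1 hz
  constructor
  · have := abs_inner_sub_inner_le_dist hu z y
    calc |⟪u, z⟫ - b| ≤ |⟪u, z⟫ - ⟪u, y⟫| + |⟪u, y⟫ - b| := abs_sub_le _ _ _
      _ ≤ a + r := by linarith [hya.out]
  · calc dist z x ≤ dist z y + dist y x := dist_triangle _ _ _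
      _ ≤ ρ + r := by linarith [mem_closedBall.1 hyx]

end Slab

section EuclideanVolume

variable {ι : Type*} [Fintype ι]

lemma volume_coord_slab_inter_closedBall_le (i : ι) (b a : ℝ) (x : EuclideanSpace ℝ ι)
    (r : ℝ) :
    volume ({z : EuclideanSpace ℝ ι | |z i - b| ≤ a} ∩ closedBall x r) ≤
      ENNReal.ofReal (2 * a) * ENNReal.ofReal (2 * r) ^ (Fintype.card ι - 1) := by
  classical
  set I : ι → Set ℝ := Function.update (fun j => Icc (x j - r) (x j + r)) i (Icc (b - a) (b + a))
  have hbox : {z : EuclideanSpace ℝ ι | |z i - b| ≤ a} ∩ closedBall x r ⊆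
      WithLp.ofLp ⁻¹' univ.pi I := by
    rintro z ⟨hzi, hzx⟩ j -
    have hzj : |z j - x j| ≤ r := (PiLp.dist_apply_le z x j).trans (mem_closedBall.1 hzx)
    rcases eq_or_ne j i with rfl | hji
    · simpa [I, abs_le, sub_le_iff_le_add, add_comm] using hzi.out
    · simpa [I, hji, abs_le, sub_le_iff_le_add, add_comm] using hzj
  have hmeas : ∀ j, MeasurableSet (I j) := fun j => by
    simp only [I, Function.update_apply]; split_ifs <;> exact measurableSet_Icc
  have hvol : ∀ j, volume (I j) =
      Function.update (fun _ => ENNReal.ofReal (2 * r)) i (ENNReal.ofReal (2 * a)) j := by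
    intro j
    rcases eq_or_ne j i with rfl | hji
    · simp only [I, Function.update_self, Real.volume_Icc]; ring_nf
    · simp only [I, Function.update_of_ne hji, Real.volume_Icc]; ring_nf
  calc volume ({z : EuclideanSpace ℝ ι | |z i - b| ≤ a} ∩ closedBall x r)
      ≤ volume (WithLp.ofLp ⁻¹' univ.pi I : Set (EuclideanSpace ℝ ι)) := measure_mono hbox
    _ = ∏ j, volume (I j) := by
      rw [(PiLp.volume_preserving_ofLp ι).measure_preimage
        (MeasurableSet.univ_pi hmeas).nullMeasurableSet, volume_pi_pi]
    _ = ENNReal.ofReal (2 * a) * ENNReal.ofReal (2 * r) ^ (Fintype.card ι - 1) := by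
      simp only [hvol, Finset.prod_update_of_mem (Finset.mem_univ i), Finset.prod_const,
        Finset.sdiff_singleton_eq_erase, Finset.card_erase_of_mem (Finset.mem_univ i),
        Finset.card_univ]

lemma volume_slab_inter_closedBall_le {u : EuclideanSpace ℝ ι} (hu : ‖u‖ = 1) (b a : ℝ)
    (x : EuclideanSpace ℝ ι) (r : ℝ) :
    volume ({y : EuclideanSpace ℝ ι | |⟪u, y⟫ - b| ≤ a} ∩ closedBall x r) ≤
      ENNReal.ofReal (2 * a) * ENNReal.ofReal (2 * r) ^ (Fintype.card ι - 1) := by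
  classical
  obtain ⟨i⟩ : Nonempty ι := by
    by_contra h
    have : IsEmpty ι := not_nonempty_iff.1 h
    simp [Subsingleton.elim u 0] at hu
  set R := Submodule.reflection (Submodule.span ℝ {u - EuclideanSpace.single i 1})ᗮ
  have hRu : R u = EuclideanSpace.single i 1 := Submodule.reflection_sub (by simp [hu])
  have hR : ∀ y, R y i = ⟪u, y⟫ := fun y => by
    rw [← R.inner_map_map, hRu, EuclideanSpace.inner_single_left]; simp
  have hsub : {y : EuclideanSpace ℝ ι | |⟪u, y⟫ - b| ≤ a} ∩ closedBall x r ⊆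
      R ⁻¹' ({z : EuclideanSpace ℝ ι | |z i - b| ≤ a} ∩ closedBall (R x) r) := by
    rintro y ⟨hya, hyx⟩
    refine ⟨by simpa [hR] using hya, ?_⟩
    simpa [R.dist_map] using hyx
  have hmeas : MeasurableSet ({z : EuclideanSpace ℝ ι | |z i - b| ≤ a} ∩ closedBall (R x) r) :=
    ((isClosed_le (by fun_prop) continuous_const).inter isClosed_closedBall).measurableSet
  calc volume ({y : EuclideanSpace ℝ ι | |⟪u, y⟫ - b| ≤ a} ∩ closedBall x r)
      ≤ volume (R ⁻¹' ({z : EuclideanSpace ℝ ι | |z i - b| ≤ a} ∩ closedBall (R x) r)) :=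
        measure_mono hsub
    _ = volume ({z : EuclideanSpace ℝ ι | |z i - b| ≤ a} ∩ closedBall (R x) r) :=
        R.measurePreserving.measure_preimage hmeas.nullMeasurableSet
    _ ≤ _ := volume_coord_slab_inter_closedBall_le i b a (R x) r

lemma volume_thickening_slab_inter_closedBall_le {u : EuclideanSpace ℝ ι} (hu : ‖u‖ = 1)
    (b : ℝ) (x : EuclideanSpace ℝ ι) {ε ρ : ℝ} (hε : 0 ≤ ε) (hερ : ε ≤ ρ) :
    volume (thickening (ε / 2) ({y | |⟪u, y⟫ - b| ≤ ε} ∩ closedBall x ρ)) ≤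
      ENNReal.ofReal (4 * ε) * ENNReal.ofReal (4 * ρ) ^ (Fintype.card ι - 1) := by
  have hsub : {y | |⟪u, y⟫ - b| ≤ ε + ε / 2} ∩ closedBall x (ρ + ε / 2) ⊆
      {y | |⟪u, y⟫ - b| ≤ 2 * ε} ∩ closedBall x (2 * ρ) :=
    inter_subset_inter (ofPred_subset_ofPred.2 fun y hy => hy.trans (by linarith))
      (closedBall_subset_closedBall (by linarith))
  calc _ ≤ volume ({y | |⟪u, y⟫ - b| ≤ 2 * ε} ∩ closedBall x (2 * ρ)) :=
        measure_mono ((thickening_slab_inter_closedBall_subset hu b ε x ρ (ε / 2)).trans hsub)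
    _ ≤ ENNReal.ofReal (2 * (2 * ε)) * ENNReal.ofReal (2 * (2 * ρ)) ^ (Fintype.card ι - 1) :=
        volume_slab_inter_closedBall_le hu b (2 * ε) x (2 * ρ)
    _ = _ := by ring_nf

end EuclideanVolume

section Covering

variable {X : Type*} [PseudoMetricSpace X] [MeasurableSpace X]

lemma measure_le_coveringNumber_mul (μ : Measure X) {ε : ℝ≥0} {A : Set X} {m : ℝ≥0∞}
    (hA : coveringNumber ε A ≠ ⊤) (hm : ∀ y ∈ A, μ (closedBall y ε) ≤ m) :
    μ A ≤ coveringNumber ε A * m := by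
  obtain ⟨C, hCA, hC, hcover, hcard⟩ := exists_set_encard_eq_coveringNumber hA
  calc μ A ≤ μ (⋃ y ∈ C, closedBall y ε) := measure_mono hcover.subset_iUnion_closedBall
    _ ≤ ∑' y : C, μ (closedBall y ε) := measure_biUnion_le μ hC.countable _
    _ ≤ ∑' _ : C, m := ENNReal.tsum_le_tsum fun y => hm y (hCA y.2)
    _ = coveringNumber ε A * m := by rw [ENNReal.tsum_const, ENat.card_coe_set_eq, hcard]

end Covering

section Packing

variable {E : Type*} [NormedAddCommGroup E] [MeasurableSpace E] [BorelSpace E]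
  (ν : Measure E) [ν.IsAddHaarMeasure]

lemma Metric.IsSeparated.encard_mul_measure_ball_le {ε : ℝ≥0} {C A : Set E} (hCA : C ⊆ A)
    (hC : IsSeparated ε C) : C.encard * ν (ball 0 (ε / 2)) ≤ ν (thickening (ε / 2) A) := by
  have hdisj : Pairwise fun y z : C => Disjoint (ball (y : E) (ε / 2)) (ball z (ε / 2)) := by
    intro y z hyz
    refine ball_disjoint_ball ?_
    have : (ε : ℝ≥0∞) < edist (y : E) z := hC y.2 z.2 (Subtype.coe_injective.ne hyz)
    rw [edist_dist, ← ENNReal.ofReal_coe_nnreal, ENNReal.ofReal_lt_ofReal_iff_of_nonneg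
      ε.coe_nonneg] at this
    linarith
  calc C.encard * ν (ball 0 (ε / 2)) = ∑' y : C, ν (ball (y : E) (ε / 2)) := by
        simp only [Measure.addHaar_ball_center, ENNReal.tsum_const, ENat.card_coe_set_eq]
    _ ≤ ν (⋃ y : C, ball (y : E) (ε / 2)) :=
        tsum_meas_le_meas_iUnion_of_disjoint ν (fun _ => measurableSet_ball) hdisj
    _ ≤ ν (thickening (ε / 2) A) :=
        measure_mono (iUnion_subset fun y => ball_subset_thickening (hCA y.2) _)

lemma coveringNumber_mul_measure_ball_le (ε : ℝ≥0) (A : Set E) :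
    coveringNumber ε A * ν (ball 0 (ε / 2)) ≤ ν (thickening (ε / 2) A) := by
  calc (coveringNumber ε A : ℝ≥0∞) * ν (ball 0 (ε / 2))
      ≤ packingNumber ε A * ν (ball 0 (ε / 2)) := by
        gcongr; exact_mod_cast coveringNumber_le_packingNumber ε A
    _ ≤ ν (thickening (ε / 2) A) := by
        simp only [packingNumber, ENat.toENNReal_iSup, ENNReal.iSup_mul, iSup_le_iff]
        exact fun C hCA hC => hC.encard_mul_measure_ball_le ν hCA

lemma measure_le_measure_thickening_div_mul (μ : Measure E) {ε : ℝ≥0} (hε : 0 < ε) {A : Set E}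
    (hA : ν (thickening (ε / 2) A) ≠ ⊤) {m : ℝ≥0∞} (hm : ∀ y ∈ A, μ (closedBall y ε) ≤ m) :
    μ A ≤ ν (thickening (ε / 2) A) / ν (ball 0 (ε / 2)) * m := by
  have hball : ν (ball 0 (ε / 2)) ≠ 0 := (measure_ball_pos ν 0 (by positivity)).ne'
  have hN : (coveringNumber ε A : ℝ≥0∞) ≤ ν (thickening (ε / 2) A) / ν (ball 0 (ε / 2)) :=
    (ENNReal.le_div_iff_mul_le (Or.inl hball) (Or.inr hA)).2
      (coveringNumber_mul_measure_ball_le ν ε A)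
  have hNtop : coveringNumber ε A ≠ ⊤ := by
    have := hN.trans_lt (ENNReal.div_lt_top hA hball)
    exact_mod_cast this.ne
  calc μ A ≤ coveringNumber ε A * m := measure_le_coveringNumber_mul μ hNtop hm
    _ ≤ _ := by gcongr

end Packing

lemma measure_compl_measSupport {n : ℕ} (μ : Measure (EuclideanSpace ℝ (Fin n))) :
    μ (measSupport μ)ᶜ = 0 := by
  refine measure_null_of_locally_null _ fun x hx => ?_
  simp only [measSupport, mem_compl_iff, mem_ofPred_eq, not_forall, not_lt] at hx
  obtain ⟨ρ, hρ, h⟩ := hx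
  exact ⟨ball x ρ, mem_nhdsWithin_of_mem_nhds (ball_mem_nhds x hρ), le_antisymm h zero_le⟩

lemma IsAffineHyperplane.exists_unit_normal {n : ℕ} {L : Set (EuclideanSpace ℝ (Fin n))}
    (hL : IsAffineHyperplane L) :
    ∃ u : EuclideanSpace ℝ (Fin n), ‖u‖ = 1 ∧ ∃ b : ℝ, L = {x | ⟪u, x⟫ = b} := by
  obtain ⟨u, b, hu, rfl⟩ := hL
  have hu' : ‖u‖ ≠ 0 := norm_ne_zero_iff.2 hu
  refine ⟨‖u‖⁻¹ • u, norm_smul_inv_norm hu, ‖u‖⁻¹ * b, ?_⟩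
  ext x
  simp [real_inner_smul_left, hu']

/-- Chosen so that `4ε (4ρ)^(n-1) / vol(B(0, ε/2)) = slabCoveringConst n * (ρ/ε)^(n-1)`. -/
noncomputable def slabCoveringConst (n : ℕ) : ℝ :=
  8 ^ n / (volume (ball (0 : EuclideanSpace ℝ (Fin n)) 1)).toReal

lemma measure_closedBall_inter_slab_le {n : ℕ} (μ : Measure (EuclideanSpace ℝ (Fin n)))
    {δ c₂ ρ₀ : ℝ} (hupper : ∀ y ∈ measSupport μ, ∀ r : ℝ, 0 < r → r < ρ₀ →
      μ (closedBall y r) ≤ ENNReal.ofReal (c₂ * r ^ δ))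
    {u : EuclideanSpace ℝ (Fin n)} (hu : ‖u‖ = 1) (b : ℝ) (x : EuclideanSpace ℝ (Fin n))
    {ε ρ : ℝ} (hε : 0 < ε) (hερ : ε < ρ) (hερ₀ : ε < ρ₀) :
    μ (closedBall x ρ ∩ {y | |⟪u, y⟫ - b| ≤ ε}) ≤
      ENNReal.ofReal (slabCoveringConst n * c₂ * (ε / ρ) ^ (δ - n + 1) * ρ ^ δ) := by
  obtain ⟨m, rfl⟩ : ∃ m, n = m + 1 := by
    refine Nat.exists_eq_add_one.2 (Nat.pos_of_ne_zero fun hn => ?_)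
    subst hn
    simp [Subsingleton.elim u 0] at hu
  have hρ : 0 < ρ := hε.trans hερ
  rw [slabCoveringConst]
  set v := volume (ball (0 : EuclideanSpace ℝ (Fin (m + 1))) 1)
  have hv : v ≠ ⊤ := measure_ball_lt_top.ne
  have hv₀ : 0 < v.toReal := ENNReal.toReal_pos (measure_ball_pos _ _ one_pos).ne' hv
  -- The centres of the covering balls must lie in the support for `hupper` to apply to them.
  set T := {y | |⟪u, y⟫ - b| ≤ ε} ∩ closedBall x ρ ∩ measSupport μ
  have hvol : volume (thickening (ε / 2) T) ≤
      ENNReal.ofReal (4 * ε) * ENNReal.ofReal (4 * ρ) ^ m := by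
    simpa using (measure_mono (thickening_subset_of_subset _ inter_subset_left)).trans
      (volume_thickening_slab_inter_closedBall_le hu b x hε.le hερ.le)
  have hball : volume (ball (0 : EuclideanSpace ℝ (Fin (m + 1))) (ε / 2)) =
      ENNReal.ofReal ((ε / 2) ^ (m + 1)) * ENNReal.ofReal v.toReal := by
    rw [Measure.addHaar_ball_of_pos _ _ (by positivity), finrank_euclideanSpace_fin,
      ENNReal.ofReal_toReal hv]
  have hexp : (ε / ρ) ^ (δ - (m + 1 : ℕ) + 1) * ρ ^ δ = ε ^ δ * (ρ / ε) ^ m := by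
    rw [show δ - (m + 1 : ℕ) + 1 = δ - m by push_cast; ring,
      Real.rpow_sub_natCast (by positivity), Real.div_rpow hε.le hρ.le, div_pow, div_pow]
    field_simp
  lift ε to ℝ≥0 using hε.le
  calc μ (closedBall x ρ ∩ {y | |⟪u, y⟫ - b| ≤ ε})
      = μ T := by rw [inter_comm, measure_inter_conull (measure_compl_measSupport μ)]
    _ ≤ volume (thickening (ε / 2) T) / volume (ball 0 (ε / 2 : ℝ)) *
          ENNReal.ofReal (c₂ * ε ^ δ) :=
        measure_le_measure_thickening_div_mul volume μ (by exact_mod_cast hε)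
          (ne_top_of_le_ne_top (by finiteness) hvol) fun y hy => hupper y hy.2 ε hε hερ₀
    _ ≤ ENNReal.ofReal (4 * ε) * ENNReal.ofReal (4 * ρ) ^ m /
          (ENNReal.ofReal ((ε / 2) ^ (m + 1)) * ENNReal.ofReal v.toReal) *
          ENNReal.ofReal (c₂ * ε ^ δ) := by
        rw [← hball]; gcongr
    _ = _ := by
        rw [← ENNReal.ofReal_pow (by positivity), ← ENNReal.ofReal_mul (by positivity),
          ← ENNReal.ofReal_mul (by positivity), ← ENNReal.ofReal_div_of_pos (by positivity),
          ← ENNReal.ofReal_mul (by positivity), mul_assoc _ ((_ / ρ) ^ _), hexp]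
        congr 1
        rw [show (8 : ℝ) = 2 * 4 by norm_num]
        simp only [div_pow, mul_pow, pow_succ]
        field_simp

lemma measure_closedBall_inter_cthickening_le_of_powerLaw {n : ℕ}
    {μ : Measure (EuclideanSpace ℝ (Fin n))} {δ c₁ c₂ ρ₀ : ℝ} (hδ : (n : ℝ) - 1 < δ)
    (hc₁ : 0 < c₁)
    (hpl : ∀ x ∈ measSupport μ, ∀ ρ : ℝ, 0 < ρ → ρ < ρ₀ →
      ENNReal.ofReal (c₁ * ρ ^ δ) ≤ μ (closedBall x ρ) ∧
        μ (closedBall x ρ) ≤ ENNReal.ofReal (c₂ * ρ ^ δ))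
    {L : Set (EuclideanSpace ℝ (Fin n))} (hL : IsAffineHyperplane L) {x : EuclideanSpace ℝ (Fin n)}
    (hx : x ∈ measSupport μ) {ρ ε : ℝ} (hρ : 0 < ρ) (hρρ₀ : ρ < ρ₀) (hε : 0 < ε) :
    μ (closedBall x ρ ∩ cthickening ε L) ≤
      ENNReal.ofReal (max 1 (slabCoveringConst n * c₂ / c₁) * (ε / ρ) ^ (δ - n + 1)) *
        μ (closedBall x ρ) := by
  obtain ⟨u, hu, b, rfl⟩ := hL.exists_unit_normal
  rcases le_or_gt ρ ε with hρε | hερ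
  · have hεργ : 1 ≤ (ε / ρ) ^ (δ - n + 1) :=
      Real.one_le_rpow ((one_le_div hρ).2 hρε) (by linarith)
    refine (measure_mono inter_subset_left).trans (le_mul_of_one_le_left' ?_)
    exact ENNReal.one_le_ofReal.2 (one_le_mul_of_one_le_of_one_le (le_max_left _ _) hεργ)
  · calc μ (closedBall x ρ ∩ cthickening ε {x | ⟪u, x⟫ = b})
        ≤ μ (closedBall x ρ ∩ {y | |⟪u, y⟫ - b| ≤ ε}) :=
          measure_mono (inter_subset_inter_right _
            (cthickening_setOf_inner_eq_subset hu b hε.le))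
      _ ≤ ENNReal.ofReal (slabCoveringConst n * c₂ * (ε / ρ) ^ (δ - n + 1) * ρ ^ δ) :=
          measure_closedBall_inter_slab_le μ (fun y hy r hr hrρ₀ => (hpl y hy r hr hrρ₀).2)
            hu b x hε hερ (hερ.trans hρρ₀)
      _ = ENNReal.ofReal (slabCoveringConst n * c₂ / c₁ * (ε / ρ) ^ (δ - n + 1)) *
            ENNReal.ofReal (c₁ * ρ ^ δ) := by
          rw [← ENNReal.ofReal_mul' (by positivity)]
          congr 1
          field_simp
      _ ≤ _ := by gcongr <;> [exact le_max_right _ _; exact (hpl x hx ρ hρ hρρ₀).1]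

lemma lt_ofReal_mul_of_le_ofReal_mul {a m : ℝ≥0∞} {k C : ℝ} (ha : a ≤ ENNReal.ofReal k * m)
    (hk : 0 ≤ k) (hkC : k < C) (hm₀ : m ≠ 0) (hm : m ≠ ⊤) : a < ENNReal.ofReal C * m :=
  ha.trans_lt <| (ENNReal.mul_lt_mul_iff_left hm₀ hm).2 <|
    (ENNReal.ofReal_lt_ofReal_iff (hk.trans_lt hkC)).2 hkC

theorem absolutelyDecaying_of_powerLaw_general {n : ℕ}
    (μ : Measure (EuclideanSpace ℝ (Fin n)))
    (δ c₁ c₂ ρ₀ : ℝ) (hδ : (n : ℝ) - 1 < δ) (hc₁ : 0 < c₁)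
    (hρ₀ : 0 < ρ₀)
    (hpl : ∀ x ∈ measSupport μ, ∀ ρ : ℝ, 0 < ρ → ρ < ρ₀ →
      ENNReal.ofReal (c₁ * ρ ^ δ) ≤ μ (closedBall x ρ) ∧
        μ (closedBall x ρ) ≤ ENNReal.ofReal (c₂ * ρ ^ δ)) :
    ∃ C : ℝ, 0 < C ∧ ∃ ρ₀' : ℝ, 0 < ρ₀' ∧
      AbsolutelyDecaying μ C (δ - n + 1) ρ₀' := by
  set C₀ := max 1 (slabCoveringConst n * c₂ / c₁)
  refine ⟨C₀ + 1, by positivity, ρ₀, hρ₀, fun L hL x hx ρ hρ hρρ₀ ε hε => ?_⟩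
  have hB₀ : μ (closedBall x ρ) ≠ 0 :=
    ((hx ρ hρ).trans_le (measure_mono ball_subset_closedBall)).ne'
  have hB : μ (closedBall x ρ) ≠ ⊤ :=
    ne_top_of_le_ne_top ENNReal.ofReal_ne_top (hpl x hx ρ hρ hρρ₀).2
  have hεργ : 0 < (ε / ρ) ^ (δ - n + 1) := by positivity
  exact lt_ofReal_mul_of_le_ofReal_mul
    (measure_closedBall_inter_cthickening_le_of_powerLaw hδ hc₁ hpl hL hx hρ hρρ₀ hε)
    (by positivity) (mul_lt_mul_of_pos_right (lt_add_one C₀) hεργ) hB₀ hB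

/-- a power law with exponent `δ > n - 1` implies
`(C, δ - n + 1)`-absolute decay for some `C > 0`. -/
theorem absolutelyDecaying_of_powerLaw {n : ℕ}
    (μ : Measure (EuclideanSpace ℝ (Fin n))) [IsLocallyFiniteMeasure μ]
    (δ c₁ c₂ ρ₀ : ℝ) (hδ : (n : ℝ) - 1 < δ) (hc₁ : 0 < c₁) (hc₂ : 0 < c₂)
    (hρ₀ : 0 < ρ₀)
    (hpl : ∀ x ∈ measSupport μ, ∀ ρ : ℝ, 0 < ρ → ρ < ρ₀ →
      ENNReal.ofReal (c₁ * ρ ^ δ) ≤ μ (closedBall x ρ) ∧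
        μ (closedBall x ρ) ≤ ENNReal.ofReal (c₂ * ρ ^ δ)) :
    ∃ C : ℝ, 0 < C ∧ ∃ ρ₀' : ℝ, 0 < ρ₀' ∧
      AbsolutelyDecaying μ C (δ - n + 1) ρ₀' :=
  absolutelyDecaying_of_powerLaw_general μ δ c₁ c₂ ρ₀ hδ hc₁ hρ₀ hpl
end

section
/- Let C, γ > 0 and let α < 1/(2C^{1/γ}+1). Set ε = 1 − C(2α/(1−α))^γ, so ε ∈ (0,1). Let μ be a (C,γ)-absolutely decaying measure on ℝⁿ with support K, let 0 < ρ < ρ₀ (the decay threshold), let x₁ ∈ K, let N ∈ ℕ, and let L₁,…,L_N be affine hyperplanes in ℝⁿ. Then there exists x₂ ∈ K such that B(x₂, αρ) ⊆ B(x₁, ρ) and dist(B(x₂,αρ), L_i) > αρ for at least ⌈εN⌉ of the hyperplanes L_i. -/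
open MeasureTheory Metric Set Filter RealInnerProductSpace

/-!
Centres `x` in `B = B(x₁, (1 - α)ρ)` keep `B(x, αρ)` inside `B(x₁, ρ)`, and `B(x, αρ)` stays
`αρ` away from `Lᵢ` as soon as `x` is not in the `2αρ`-neighbourhood of `Lᵢ`. At scale `(1 - α)ρ`
absolute decay says that this neighbourhood has less than the fraction `1 - ε` of `μ B`.
Integrating over `B` the number of neighbourhoods containing a point, some point of the support
lies in fewer than `(1 - ε)N` of them, hence avoids more than `εN` hyperplanes.
-/

open scoped ENNReal
open Finset

theorem measSupport_eq_support {n : ℕ} (μ : Measure (EuclideanSpace ℝ (Fin n))) :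
    measSupport μ = μ.support := by
  ext x
  exact nhds_basis_ball.mem_measureSupport.symm

section Pigeonhole

variable {X ι : Type*} [MeasurableSpace X] [Fintype ι] {μ : Measure X} {B : Set X}
  {A : ι → Set X} {k : ℝ≥0∞}

open scoped Classical in
theorem frequently_card_lt_of_sum_measure_inter_lt (hA : ∀ i, MeasurableSet (A i))
    (h : ∑ i, μ (B ∩ A i) < k * μ B) :
    ∃ᵐ x ∂μ.restrict B, (#{i | x ∈ A i} : ℝ≥0∞) < k := by
  by_contra! hk
  have hcount : ∀ x, (#{i | x ∈ A i} : ℝ≥0∞) = ∑ i, (A i).indicator 1 x := by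
    intro x
    rw [Finset.natCast_card_filter]
    simp only [Set.indicator_apply, Pi.one_apply]
  refine h.not_ge ?_
  calc k * μ B = ∫⁻ _, k ∂μ.restrict B := by simp
    _ ≤ ∫⁻ x, ∑ i, (A i).indicator 1 x ∂μ.restrict B :=
      lintegral_mono_ae (hk.mono fun x hx => (hcount x).symm ▸ hx)
    _ = ∑ i, μ (B ∩ A i) := by
      rw [lintegral_finsetSum _ fun i _ => measurable_one.indicator (hA i)]
      simp [lintegral_indicator_one (hA _), Measure.restrict_apply (hA _), Set.inter_comm]

open scoped Classical in
theorem exists_mem_support_card_lt_of_sum_measure_inter_lt [TopologicalSpace X]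
    [HereditarilyLindelofSpace X] (hB : MeasurableSet B) (hA : ∀ i, MeasurableSet (A i))
    (h : ∑ i, μ (B ∩ A i) < k * μ B) :
    ∃ x ∈ B ∩ μ.support, (#{i | x ∈ A i} : ℝ≥0∞) < k := by
  obtain ⟨x, hk, hxB, hxμ⟩ := ((frequently_card_lt_of_sum_measure_inter_lt hA h).and_eventually
    ((ae_restrict_mem hB).and (ae_restrict_of_ae Measure.support_mem_ae))).exists
  exact ⟨x, ⟨hxB, hxμ⟩, hk⟩

end Pigeonhole

theorem closedBall_inter_cthickening_eq_empty {E : Type*} [PseudoMetricSpace E] {x : E}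
    {a b : ℝ} {L : Set E} (ha : 0 ≤ a) (hb : 0 ≤ b) (hx : x ∉ cthickening (a + b) L) :
    closedBall x a ∩ cthickening b L = ∅ := by
  refine eq_empty_iff_forall_notMem.2 fun y ⟨hyx, hyL⟩ => hx ?_
  exact cthickening_cthickening_subset ha hb L
    (mem_cthickening_of_dist_le x y a _ hyL (mem_closedBall'.1 hyx))

theorem ceil_mul_card_le_card_filter_not {ι : Type*} [Fintype ι] (p : ι → Prop)
    [DecidablePred p] {t : ℝ} (h : (#{i | p i} : ℝ) < Fintype.card ι * (1 - t)) :
    ⌈t * Fintype.card ι⌉ ≤ #{i | ¬ p i} := by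
  have hsplit : (#{i | p i} : ℝ) + #{i | ¬ p i} = Fintype.card ι := by
    exact_mod_cast card_filter_add_card_filter_not (s := univ) p
  rw [Int.ceil_le]
  push_cast
  linarith

theorem mul_rpow_two_mul_div_one_sub_lt_one {C γ α : ℝ} (hC : 0 < C) (hγ : 0 < γ) (hα : 0 < α)
    (hα' : α < 1 / (2 * C ^ (1 / γ) + 1)) :
    C * (2 * α / (1 - α)) ^ γ < 1 := by
  set D := C ^ (1 / γ)
  have hD : 0 < D := Real.rpow_pos_of_pos hC _
  have hαD : α * (2 * D + 1) < 1 := (lt_div_iff₀ (by positivity)).1 hα'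
  have h1α : 0 < 1 - α := by nlinarith
  have hβD : 2 * α / (1 - α) * D < 1 := by
    rw [div_mul_eq_mul_div, div_lt_one h1α]
    linarith
  calc C * (2 * α / (1 - α)) ^ γ = (2 * α / (1 - α) * D) ^ γ := by
        rw [Real.mul_rpow (by positivity) hD.le, ← Real.rpow_mul hC.le, one_div,
          inv_mul_cancel₀ hγ.ne', Real.rpow_one, mul_comm]
    _ < 1 := Real.rpow_lt_one (by positivity) hβD hγ

open scoped Classical in
theorem AbsolutelyDecaying.exists_mem_support_card_lt {n : ℕ}
    {μ : Measure (EuclideanSpace ℝ (Fin n))} {C γ ρ₀ : ℝ} (hμ : AbsolutelyDecaying μ C γ ρ₀)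
    {ι : Type*} [Fintype ι] [Nonempty ι] {L : ι → Set (EuclideanSpace ℝ (Fin n))}
    (hL : ∀ i, IsAffineHyperplane (L i)) {x₁ : EuclideanSpace ℝ (Fin n)}
    (hx₁ : x₁ ∈ measSupport μ) {r δ : ℝ} (hr : 0 < r) (hr₀ : r < ρ₀) (hδ : 0 < δ) :
    ∃ x ∈ closedBall x₁ r ∩ measSupport μ,
      (#{i | x ∈ cthickening δ (L i)} : ℝ) < Fintype.card ι * (C * (δ / r) ^ γ) := by
  set c := C * (δ / r) ^ γ
  have hsum : ∑ i, μ (closedBall x₁ r ∩ cthickening δ (L i))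
      < (Fintype.card ι * ENNReal.ofReal c) * μ (closedBall x₁ r) := by
    calc _ < ∑ _i : ι, ENNReal.ofReal c * μ (closedBall x₁ r) :=
          ENNReal.sum_lt_sum_of_nonempty univ_nonempty
            fun i _ => hμ (L i) (hL i) x₁ hx₁ r hr hr₀ δ hδ
      _ = _ := by simp [mul_assoc]
  obtain ⟨x, hx, hcard⟩ := exists_mem_support_card_lt_of_sum_measure_inter_lt
    measurableSet_closedBall (fun i => isClosed_cthickening.measurableSet) hsum
  refine ⟨x, measSupport_eq_support μ ▸ hx, ?_⟩
  rwa [← ENNReal.ofReal_natCast, ← ENNReal.ofReal_natCast (Fintype.card ι),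
    ← ENNReal.ofReal_mul (by positivity), ENNReal.ofReal_lt_ofReal_iff_of_nonneg (by positivity)]
    at hcard

theorem log_turns_general {n : ℕ}
    (μ : Measure (EuclideanSpace ℝ (Fin n)))
    (C γ ρ₀ : ℝ) (hC : 0 < C) (hγ : 0 < γ)
    (hμ : AbsolutelyDecaying μ C γ ρ₀)
    (α : ℝ) (hα : 0 < α) (hα' : α < 1 / (2 * C ^ (1/γ) + 1))
    (ε : ℝ) (hε : ε = 1 - C * (2 * α / (1 - α)) ^ γ)
    (ρ : ℝ) (hρ : 0 < ρ) (hρ' : ρ < ρ₀)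
    (x₁ : EuclideanSpace ℝ (Fin n)) (hx₁ : x₁ ∈ measSupport μ)
    (N : ℕ) (L : Fin N → Set (EuclideanSpace ℝ (Fin n)))
    (hL : ∀ i, IsAffineHyperplane (L i)) :
    ε ∈ Set.Ioo (0:ℝ) 1 ∧
    ∃ x₂ ∈ measSupport μ,
      closedBall x₂ (α * ρ) ⊆ closedBall x₁ ρ ∧
      ∃ S : Finset (Fin N), (⌈ε * N⌉ : ℤ) ≤ S.card ∧
        ∀ i ∈ S, closedBall x₂ (α * ρ) ∩ cthickening (α * ρ) (L i) = ∅ := by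
  classical
  have hα1 : α < 1 := by
    have : 0 ≤ C ^ (1 / γ) := Real.rpow_nonneg hC.le _
    exact hα'.trans_le (div_le_one_of_le₀ (by linarith) (by linarith))
  have hc := mul_rpow_two_mul_div_one_sub_lt_one hC hγ hα hα'
  have hc₀ : 0 < C * (2 * α / (1 - α)) ^ γ := by
    have : 0 < 1 - α := by linarith
    positivity
  refine ⟨⟨by linarith, by linarith⟩, ?_⟩
  obtain rfl | hN := Nat.eq_zero_or_pos N
  · exact ⟨x₁, hx₁, closedBall_subset_closedBall (by nlinarith), ∅, by simp, by simp⟩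
  have : Nonempty (Fin N) := ⟨⟨0, hN⟩⟩
  have hr : 0 < (1 - α) * ρ := by nlinarith
  have hscale : C * (2 * α * ρ / ((1 - α) * ρ)) ^ γ = 1 - ε := by
    rw [hε, mul_div_mul_right _ _ hρ.ne']
    ring
  obtain ⟨x, ⟨hxB, hxμ⟩, hcard⟩ :=
    hμ.exists_mem_support_card_lt hL hx₁ hr (by nlinarith) (by positivity : 0 < 2 * α * ρ)
  rw [hscale] at hcard
  have hfar := ceil_mul_card_le_card_filter_not _ hcard
  rw [Fintype.card_fin] at hfar
  refine ⟨x, hxμ, closedBall_subset_closedBall' ?_, _, hfar, fun i hi => ?_⟩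
  · linarith [mem_closedBall.1 hxB]
  · refine closedBall_inter_cthickening_eq_empty (by positivity) (by positivity) ?_
    rw [← two_mul, ← mul_assoc]
    exact (mem_filter.1 hi).2

/-- Lemma "log turns". Alice can move to avoid a fraction
`ε = 1 - C(2α/(1-α))^γ` of any `N` given hyperplanes. -/
theorem log_turns {n : ℕ}
    (μ : Measure (EuclideanSpace ℝ (Fin n))) [IsLocallyFiniteMeasure μ]
    (C γ ρ₀ : ℝ) (hC : 0 < C) (hγ : 0 < γ) (hρ₀ : 0 < ρ₀)
    (hμ : AbsolutelyDecaying μ C γ ρ₀)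
    (α : ℝ) (hα : 0 < α) (hα' : α < 1 / (2 * C ^ (1/γ) + 1))
    (ε : ℝ) (hε : ε = 1 - C * (2 * α / (1 - α)) ^ γ)
    (ρ : ℝ) (hρ : 0 < ρ) (hρ' : ρ < ρ₀)
    (x₁ : EuclideanSpace ℝ (Fin n)) (hx₁ : x₁ ∈ measSupport μ)
    (N : ℕ) (L : Fin N → Set (EuclideanSpace ℝ (Fin n)))
    (hL : ∀ i, IsAffineHyperplane (L i)) :
    ε ∈ Set.Ioo (0:ℝ) 1 ∧
    ∃ x₂ ∈ measSupport μ,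
      closedBall x₂ (α * ρ) ⊆ closedBall x₁ ρ ∧
      ∃ S : Finset (Fin N), (⌈ε * N⌉ : ℤ) ≤ S.card ∧
        ∀ i ∈ S, closedBall x₂ (α * ρ) ∩ cthickening (α * ρ) (L i) = ∅ :=
  log_turns_general μ C γ ρ₀ hC hγ hμ α hα hα' ε hε ρ hρ hρ' x₁ hx₁ N L hL
end

section
/- Let M be an m×n real matrix with operator norm t = ‖M‖_op > 0, and let v be a unit vector in ℝⁿ with ‖Mv‖ = t. Let V ⊂ ℝᵐ be the hyperplane through 0 perpendicular to Mv, and let W = M⁻¹(V) ⊆ ℝⁿ. Then for any c > 0, the preimage M⁻¹(B(0,c)) of the closed ball of radius c around 0 is contained in the closed (c/t)-neighborhood of W. -/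
open Metric Set RealInnerProductSpace

/-! Write `x = w + η v` with `η = ⟪M v, M x⟫ / ‖M v‖²`, so that `M w` is orthogonal to `M v`.
Then `dist x w = |η| ≤ ‖M x‖ / ‖M v‖` by Cauchy–Schwarz. -/

section

variable {E F : Type*} [SeminormedAddCommGroup E] [NormedSpace ℝ E]
  [NormedAddCommGroup F] [InnerProductSpace ℝ F]

theorem inner_sub_inner_div_norm_sq_smul_self {u : F} (hu : u ≠ 0) (y : F) :
    ⟪u, y - (⟪u, y⟫ / ‖u‖ ^ 2) • u⟫ = 0 := by
  have : ‖u‖ ≠ 0 := norm_ne_zero_iff.mpr hu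
  rw [inner_sub_right, real_inner_smul_right, real_inner_self_eq_norm_sq]
  field_simp
  ring

theorem abs_inner_div_norm_sq_le (u y : F) : |⟪u, y⟫ / ‖u‖ ^ 2| ≤ ‖y‖ / ‖u‖ := by
  rcases eq_or_ne u 0 with rfl | hu
  · simp
  have hu' : 0 < ‖u‖ := norm_pos_iff.mpr hu
  calc |⟪u, y⟫ / ‖u‖ ^ 2| = |⟪u, y⟫| / ‖u‖ / ‖u‖ := by rw [abs_div, abs_sq, div_div, sq]
    _ ≤ ‖u‖ * ‖y‖ / ‖u‖ / ‖u‖ := by gcongr; exact abs_real_inner_le_norm u y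
    _ = ‖y‖ / ‖u‖ := by rw [mul_div_cancel_left₀ _ hu'.ne']

theorem LinearMap.preimage_closedBall_subset_cthickening_preimage_orthogonal
    (M : E →ₗ[ℝ] F) {v : E} (hv : ‖v‖ = 1) (hMv : M v ≠ 0) (c : ℝ) :
    M ⁻¹' closedBall 0 c ⊆ cthickening (c / ‖M v‖) (M ⁻¹' {y | ⟪M v, y⟫ = 0}) := by
  intro x hx
  set η := ⟪M v, M x⟫ / ‖M v‖ ^ 2
  refine mem_cthickening_of_dist_le x (x - η • v) _ _ ?_ ?_
  · show ⟪M v, M (x - η • v)⟫ = 0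
    rw [map_sub, map_smul]
    exact inner_sub_inner_div_norm_sq_smul_self hMv (M x)
  · calc dist x (x - η • v) = |η| := by simp [norm_smul, hv]
      _ ≤ ‖M x‖ / ‖M v‖ := abs_inner_div_norm_sq_le _ _
      _ ≤ c / ‖M v‖ := by gcongr; simpa using hx

end

theorem preimage_ball_subset_cthickening_general {m n : ℕ}
    (M : EuclideanSpace ℝ (Fin n) →L[ℝ] EuclideanSpace ℝ (Fin m))
    (t : ℝ) (htpos : 0 < t)
    (v : EuclideanSpace ℝ (Fin n)) (hv : ‖v‖ = 1) (hMv : ‖M v‖ = t)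
    (V : Set (EuclideanSpace ℝ (Fin m))) (hV : V = {y | ⟪M v, y⟫ = 0})
    (W : Set (EuclideanSpace ℝ (Fin n))) (hW : W = M ⁻¹' V)
    (c : ℝ) :
    M ⁻¹' closedBall 0 c ⊆ cthickening (c / t) W := by
  subst hV hW hMv
  exact M.toLinearMap.preimage_closedBall_subset_cthickening_preimage_orthogonal hv
    (norm_pos_iff.mp htpos) c

/-- the preimage of a small ball under a linear map `M` is contained
in a thin neighborhood of the hyperplane `W = M⁻¹(V)`, where `V ⊥ Mv` and `v`
realizes the operator norm. -/
theorem preimage_ball_subset_cthickening {m n : ℕ}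
    (M : EuclideanSpace ℝ (Fin n) →L[ℝ] EuclideanSpace ℝ (Fin m))
    (t : ℝ) (ht : t = ‖M‖) (htpos : 0 < t)
    (v : EuclideanSpace ℝ (Fin n)) (hv : ‖v‖ = 1) (hMv : ‖M v‖ = t)
    (V : Set (EuclideanSpace ℝ (Fin m))) (hV : V = {y | ⟪M v, y⟫ = 0})
    (W : Set (EuclideanSpace ℝ (Fin n))) (hW : W = M ⁻¹' V)
    (c : ℝ) (hc : 0 < c) :
    M ⁻¹' closedBall 0 c ⊆ cthickening (c / t) W :=
  preimage_ball_subset_cthickening_general M t htpos v hv hMv V hV W hW c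
end

section
/- Let B be the m×m Jordan block with eigenvalue λ ∈ ℂ, λ ≠ 0. Then ‖B^k‖_op / |b_{1m}(k)| → 1 as k → ∞, where b_{1m}(k) = C(k, m−1) λ^{k−(m−1)} is the top-right entry of B^k. Consequently, ‖B^{k+1}‖_op / ‖B^k‖_op → |λ| as k → ∞. -/
/-!
Write `B = λ • 1 + N` with `N` the nilpotent upper shift. The binomial theorem gives
`(B ^ k) i j = C(k, j - i) λ ^ (k - (j - i))`, and since `C(k, d) = Θ(k ^ d)`, every entry other
than the top-right corner is `o` of the corner. The operator norm lies between the norm of the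
corner and the sum of the norms of all entries, so it is asymptotically equivalent to the corner.
The ratio statement follows because, by Pascal's rule, `|b (k + 1)| ~ |λ| |b k|`.
-/

open Filter

noncomputable def opNormC {m : ℕ} (A : Matrix (Fin m) (Fin m) ℂ) : ℝ :=
  ‖Matrix.toEuclideanCLM (𝕜 := ℂ) A‖

open Asymptotics

theorem EuclideanSpace.norm_le_sum_norm {𝕜 ι : Type*} [RCLike 𝕜] [Fintype ι]
    (y : EuclideanSpace 𝕜 ι) : ‖y‖ ≤ ∑ i, ‖y i‖ := by
  rw [EuclideanSpace.norm_eq]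
  calc √(∑ i, ‖y i‖ ^ 2) ≤ √((∑ i, ‖y i‖) ^ 2) :=
        Real.sqrt_le_sqrt (Finset.sum_sq_le_sq_sum_of_nonneg fun _ _ ↦ norm_nonneg _)
    _ = ∑ i, ‖y i‖ := Real.sqrt_sq (Finset.sum_nonneg fun _ _ ↦ norm_nonneg _)

section OpNorm

variable {m : ℕ}

theorem norm_apply_le_opNormC (A : Matrix (Fin m) (Fin m) ℂ) (i j : Fin m) :
    ‖A i j‖ ≤ opNormC A := by
  have hcol : Matrix.toEuclideanCLM (𝕜 := ℂ) A (EuclideanSpace.single j 1) i = A i j := by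
    simp [Matrix.ofLp_toEuclideanCLM]
  calc ‖A i j‖ ≤ ‖Matrix.toEuclideanCLM (𝕜 := ℂ) A (EuclideanSpace.single j 1)‖ :=
        hcol ▸ PiLp.norm_apply_le _ i
    _ ≤ opNormC A * ‖EuclideanSpace.single j (1 : ℂ)‖ := ContinuousLinearMap.le_opNorm _ _
    _ = opNormC A := by simp

theorem opNormC_le_sum_norm_apply (A : Matrix (Fin m) (Fin m) ℂ) :
    opNormC A ≤ ∑ p : Fin m × Fin m, ‖A p.1 p.2‖ := by
  refine ContinuousLinearMap.opNorm_le_bound _ (by positivity) fun x ↦ ?_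
  calc ‖Matrix.toEuclideanCLM (𝕜 := ℂ) A x‖
      ≤ ∑ i, ‖Matrix.toEuclideanCLM (𝕜 := ℂ) A x i‖ := EuclideanSpace.norm_le_sum_norm _
    _ ≤ ∑ i, ∑ j, ‖A i j‖ * ‖x‖ := by
        refine Finset.sum_le_sum fun i _ ↦ ?_
        rw [Matrix.ofLp_toEuclideanCLM]
        calc ‖∑ j, A i j * x j‖ ≤ ∑ j, ‖A i j * x j‖ := norm_sum_le _ _
          _ ≤ ∑ j, ‖A i j‖ * ‖x‖ := Finset.sum_le_sum fun j _ ↦ by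
              rw [norm_mul]; gcongr; exact PiLp.norm_apply_le x j
    _ = (∑ p : Fin m × Fin m, ‖A p.1 p.2‖) * ‖x‖ := by
        rw [Fintype.sum_prod_type, Finset.sum_mul]
        simp_rw [Finset.sum_mul]

theorem isEquivalent_opNormC_of_isLittleO {α : Type*} {l : Filter α}
    (A : α → Matrix (Fin m) (Fin m) ℂ) (i₀ j₀ : Fin m)
    (h : ∀ p ≠ (i₀, j₀), (fun x ↦ ‖A x p.1 p.2‖) =o[l] fun x ↦ ‖A x i₀ j₀‖) :
    (fun x ↦ opNormC (A x)) ~[l] fun x ↦ ‖A x i₀ j₀‖ := by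
  have hrest : (fun x ↦ ∑ p ∈ Finset.univ.erase (i₀, j₀), ‖A x p.1 p.2‖) =o[l]
      fun x ↦ ‖A x i₀ j₀‖ :=
    IsLittleO.fun_sum fun p hp ↦ h p (Finset.ne_of_mem_erase hp)
  refine IsBigO.trans_isLittleO (isBigO_of_le _ fun x ↦ ?_) hrest
  have hsplit := Finset.add_sum_erase Finset.univ (fun p : Fin m × Fin m ↦ ‖A x p.1 p.2‖)
    (Finset.mem_univ (i₀, j₀))
  have hlower := norm_apply_le_opNormC (A x) i₀ j₀
  have hupper := opNormC_le_sum_norm_apply (A x)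
  rw [Pi.sub_apply, Real.norm_of_nonneg (sub_nonneg.2 hlower), Real.norm_of_nonneg (by positivity)]
  simp only at hsplit
  linarith

end OpNorm

theorem Fin.sum_ite_val_eq {M : Type*} [AddCommMonoid M] {m : ℕ} (a : ℕ) (f : Fin m → M) :
    ∑ l : Fin m, (if (l : ℕ) = a then f l else 0) = if h : a < m then f ⟨a, h⟩ else 0 := by
  split_ifs with h
  · have hval (l : Fin m) : (l : ℕ) = a ↔ l = ⟨a, h⟩ := by rw [Fin.ext_iff]
    simp only [hval, Finset.sum_ite_eq', Finset.mem_univ, if_true]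
  · exact Finset.sum_eq_zero fun l _ ↦ if_neg (by omega)

section JordanBlock

variable {R : Type*} [CommSemiring R] {m : ℕ}

def upperShift (m : ℕ) : Matrix (Fin m) (Fin m) R :=
  Matrix.of fun i j ↦ if (j : ℕ) = i + 1 then 1 else 0

theorem upperShift_apply (i j : Fin m) :
    (upperShift m : Matrix (Fin m) (Fin m) R) i j = if (j : ℕ) = i + 1 then 1 else 0 :=
  rfl

theorem upperShift_pow_apply (n : ℕ) (i j : Fin m) :
    (upperShift m ^ n : Matrix (Fin m) (Fin m) R) i j = if (j : ℕ) = i + n then 1 else 0 := by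
  induction n generalizing i with
  | zero => simp [Matrix.one_apply, Fin.ext_iff, eq_comm]
  | succ n ih =>
    simp only [pow_succ', Matrix.mul_apply, upperShift_apply, ite_mul, one_mul, zero_mul, ih,
      Fin.sum_ite_val_eq]
    split_ifs <;> first | rfl | omega

def jordanBlock (m : ℕ) (lam : R) : Matrix (Fin m) (Fin m) R :=
  lam • 1 + upperShift m

theorem jordanBlock_apply (lam : R) (i j : Fin m) :
    jordanBlock m lam i j = if j = i then lam else if (j : ℕ) = i + 1 then 1 else 0 := by
  by_cases h : j = i
  · simp [jordanBlock, upperShift, h]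
  · simp [jordanBlock, upperShift, h, Ne.symm h]

theorem jordanBlock_pow_apply (lam : R) (k : ℕ) (i j : Fin m) :
    (jordanBlock m lam ^ k) i j =
      if i ≤ j then (k.choose (j - i) : R) * lam ^ (k - (j - i)) else 0 := by
  have hcomm : Commute (upperShift m) (lam • (1 : Matrix (Fin m) (Fin m) R)) :=
    (Commute.one_right _).smul_right lam
  have hterm (x : ℕ) :
      (k.choose x • (upperShift m ^ x * (lam • 1) ^ (k - x)) : Matrix (Fin m) (Fin m) R) i j =
        if i ≤ j ∧ (j : ℕ) - i = x then (k.choose x : R) * lam ^ (k - x) else 0 := by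
    have hdiag : (j : ℕ) = i + x ↔ i ≤ j ∧ (j : ℕ) - i = x := by rw [Fin.le_def]; omega
    simp only [smul_pow, one_pow, mul_smul_comm, mul_one, Matrix.smul_apply,
      upperShift_pow_apply, hdiag, nsmul_eq_mul, smul_eq_mul]
    split_ifs <;> ring
  rw [jordanBlock, add_comm, hcomm.add_pow', Finset.Nat.sum_antidiagonal_eq_sum_range_succ_mk,
    Matrix.sum_apply]
  simp only [hterm]
  split_ifs with hij
  · simp only [hij, true_and, Finset.sum_ite_eq, Finset.mem_range]
    split_ifs with hk
    · rfl
    · simp [Nat.choose_eq_zero_of_lt (by omega : k < (j : ℕ) - i)]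
  · simp [hij]

end JordanBlock

theorem Nat.choose_isLittleO_choose {d r : ℕ} (hdr : d < r) :
    (fun k : ℕ ↦ (k.choose d : ℝ)) =o[atTop] fun k ↦ (k.choose r : ℝ) :=
  (isTheta_choose d).isBigO.trans_isLittleO <|
    ((isLittleO_pow_pow_atTop_of_lt hdr).comp_tendsto tendsto_natCast_atTop_atTop).trans_isTheta
      (isTheta_choose r).symm

theorem Nat.succ_choose_isEquivalent_choose (r : ℕ) :
    (fun k : ℕ ↦ ((k + 1).choose r : ℝ)) ~[atTop] fun k ↦ (k.choose r : ℝ) := by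
  cases r with
  | zero => simpa using IsEquivalent.refl
  | succ r =>
    have hpascal : ((fun k : ℕ ↦ ((k + 1).choose (r + 1) : ℝ)) - fun k ↦ (k.choose (r + 1) : ℝ)) =
        fun k ↦ (k.choose r : ℝ) := by
      funext k
      simp [Nat.choose_succ_succ]
    refine IsLittleO.isEquivalent ?_
    rw [hpascal]
    exact Nat.choose_isLittleO_choose r.lt_succ_self

theorem isLittleO_choose_mul_pow {d r : ℕ} (hdr : d < r) (c : ℝ) :
    (fun k : ℕ ↦ (k.choose d : ℝ) * c ^ (k - d)) =o[atTop]
      fun k ↦ (k.choose r : ℝ) * c ^ (k - r) := by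
  refine (((Nat.choose_isLittleO_choose hdr).const_mul_left (c ^ (r - d))).mul_isBigO
    (isBigO_refl (fun k ↦ c ^ (k - r)) atTop)).congr' ?_ EventuallyEq.rfl
  filter_upwards [eventually_ge_atTop r] with k hk
  rw [mul_comm _ (k.choose d : ℝ), mul_assoc, ← pow_add]
  congr 2
  omega

theorem isEquivalent_succ_choose_mul_pow (r : ℕ) (c : ℝ) :
    (fun k : ℕ ↦ ((k + 1).choose r : ℝ) * c ^ (k + 1 - r)) ~[atTop]
      fun k ↦ c * ((k.choose r : ℝ) * c ^ (k - r)) := by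
  refine ((Nat.succ_choose_isEquivalent_choose r).mul
    (IsEquivalent.refl (u := fun k : ℕ ↦ c ^ (k - r) * c))).congr_left ?_ |>.congr_right ?_
  · filter_upwards [eventually_ge_atTop r] with k hk
    rw [Pi.mul_apply, ← pow_succ, Nat.sub_add_comm hk]
  · exact .of_eq (by funext k; simp only [Pi.mul_apply]; ring)

theorem isLittleO_jordanBlock_pow_apply {𝕜 : Type*} [RCLike 𝕜] {n : ℕ} (lam : 𝕜)
    {i j : Fin (n + 1)} (hij : (i, j) ≠ (0, Fin.last n)) :
    (fun k ↦ ‖(jordanBlock (n + 1) lam ^ k) i j‖) =o[atTop]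
      fun k ↦ ‖(jordanBlock (n + 1) lam ^ k) 0 (Fin.last n)‖ := by
  have hcorner : ∀ k, ‖(jordanBlock (n + 1) lam ^ k) 0 (Fin.last n)‖ =
      (k.choose n : ℝ) * ‖lam‖ ^ (k - n) := by
    simp [jordanBlock_pow_apply]
  simp only [hcorner]
  simp only [jordanBlock_pow_apply]
  split_ifs with hle
  · have hoff : (i : ℕ) ≠ 0 ∨ (j : ℕ) ≠ n := by
      by_contra! h
      exact hij (Prod.ext (Fin.ext h.1) (Fin.ext h.2))
    have := j.is_le
    rw [Fin.le_def] at hle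
    simpa only [norm_mul, norm_pow, RCLike.norm_natCast] using
      isLittleO_choose_mul_pow (by omega) ‖lam‖
  · simp

/-- asymptotics of the operator norm of powers of a Jordan block. -/
theorem jordan_block_pow_opNorm_asymptotics {m : ℕ} (hm : 0 < m) (lam : ℂ)
    (hlam : lam ≠ 0)
    (B : Matrix (Fin m) (Fin m) ℂ)
    (hB : ∀ i j : Fin m, B i j =
      if j = i then lam else if (j : ℕ) = (i : ℕ) + 1 then 1 else 0)
    (b : ℕ → ℂ)
    (hb : ∀ k, b k = (Nat.choose k (m - 1) : ℂ) * lam ^ (k - (m - 1))) :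
    Tendsto (fun k : ℕ => opNormC (B ^ k) / ‖b k‖) atTop (nhds 1) ∧
      Tendsto (fun k : ℕ => opNormC (B ^ (k + 1)) / opNormC (B ^ k)) atTop
        (nhds ‖lam‖) := by
  obtain ⟨n, rfl⟩ := Nat.exists_eq_add_one_of_ne_zero hm.ne'
  obtain rfl : B = jordanBlock (n + 1) lam :=
    Matrix.ext fun i j ↦ (hB i j).trans (jordanBlock_apply lam i j).symm
  have hcorner (k : ℕ) : (jordanBlock (n + 1) lam ^ k) 0 (Fin.last n) = b k := by
    simp [jordanBlock_pow_apply, hb]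
  have hequiv : (fun k ↦ opNormC (jordanBlock (n + 1) lam ^ k)) ~[atTop] fun k ↦ ‖b k‖ := by
    simpa only [hcorner] using isEquivalent_opNormC_of_isLittleO _ 0 (Fin.last n)
      fun p hp ↦ isLittleO_jordanBlock_pow_apply lam hp
  have hb_pos : ∀ᶠ k in atTop, 0 < ‖b k‖ := by
    filter_upwards [eventually_ge_atTop n] with k hk
    simpa [hb, hlam] using Nat.choose_pos hk
  have hb_succ : (fun k ↦ ‖b (k + 1)‖) ~[atTop] fun k ↦ ‖lam‖ * ‖b k‖ := by
    simpa [hb] using isEquivalent_succ_choose_mul_pow n ‖lam‖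
  refine ⟨(isEquivalent_iff_tendsto_one (hb_pos.mono fun k ↦ ne_of_gt)).1 hequiv, ?_⟩
  have hnext : (fun k ↦ opNormC (jordanBlock (n + 1) lam ^ (k + 1))) ~[atTop]
      fun k ↦ ‖lam‖ * opNormC (jordanBlock (n + 1) lam ^ k) :=
    ((hequiv.comp_tendsto (tendsto_add_atTop_nat 1)).trans hb_succ).trans
      (IsEquivalent.refl.mul hequiv.symm)
  have hnorm_pos : ∀ᶠ k in atTop, 0 < opNormC (jordanBlock (n + 1) lam ^ k) :=
    hb_pos.mono fun k hk ↦ hk.trans_le (hcorner k ▸ norm_apply_le_opNormC _ 0 (Fin.last n))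
  refine (hnext.div IsEquivalent.refl).symm.tendsto_nhds (tendsto_const_nhds.congr' ?_)
  filter_upwards [hnorm_pos] with k hk
  simp [hk.ne']
end

section
/- Let μ be a (C,γ)-absolutely decaying measure on ℝⁿ with support K, and let α < 1/(2C^{1/γ}+1) and ε = 1 − C(2α/(1−α))^γ. For any 0 < β < 1, N ∈ ℕ, r = ⌊log_{1/(1−ε)} N⌋ + 1, we have (1−ε)^r N < 1; consequently, given a ball B(x,ρ) with x ∈ K, 0 < ρ < ρ₀, and N affine hyperplanes L₁,…,L_N, there is a finite sequence of r nested choices (each shrinking the radius by factor α and allowing an adversary to shrink by factor β in between, staying centered in K) resulting in a ball B(x', α(αβ)^{r−1}ρ)-sized ball disjoint from the (α(αβ)^{r−1}ρ)-neighborhoods of all N hyperplanes. -/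
open MeasureTheory Metric Set Filter RealInnerProductSpace

/-! In round `k` the adversary's ball `B(c_k, ρ_k)` has radius `ρ_k < ρ₀`. Absolute decay gives
each `2αρ_k`-neighbourhood of a hyperplane less than a fraction `C (2α/(1-α))^γ = 1-ε` of the
mass of `B(c_k, (1-α)ρ_k)`, so averaging the number of surviving neighbourhoods containing a point
over this ball yields a point of the support lying in at most a fraction `1-ε` of them. Alice
centres her ball of radius `αρ_k` there; it misses the `αρ_k`-neighbourhoods of all the other
hyperplanes, and so do all later balls, which are nested in it. After `r` rounds at most
`(1-ε)^r N < 1` hyperplanes survive. -/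

open scoped ENNReal Finset

open Classical in
theorem exists_mem_card_filter_mem_lt {X ι : Type*} [MeasurableSpace X] {μ : Measure X}
    {B : Set X} (hB : MeasurableSet B) {p : X → Prop} (hp : ∀ᵐ x ∂μ, p x)
    {T : ι → Set X} (hT : ∀ i, MeasurableSet (T i)) {S : Finset ι} (hS : S.Nonempty)
    {c : ℝ≥0∞} (hc : ∀ i ∈ S, μ (B ∩ T i) < c * μ B) :
    ∃ x ∈ B, p x ∧ (#{i ∈ S | x ∈ T i} : ℝ≥0∞) < c * #S := by
  by_contra! h
  have hcount : ∀ x, (#{i ∈ S | x ∈ T i} : ℝ≥0∞) = ∑ i ∈ S, (T i).indicator 1 x := by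
    intro x
    rw [Finset.card_filter]
    push_cast
    simp only [Set.indicator_apply, Pi.one_apply]
  have hintegral : ∫⁻ x in B, (#{i ∈ S | x ∈ T i} : ℝ≥0∞) ∂μ = ∑ i ∈ S, μ (B ∩ T i) := by
    simp_rw [hcount]
    rw [lintegral_finsetSum _ fun i _ => measurable_one.indicator (hT i)]
    refine Finset.sum_congr rfl fun i _ => ?_
    rw [lintegral_indicator_one (hT i), Measure.restrict_apply (hT i), inter_comm]
  have hlower : c * #S * μ B ≤ ∑ i ∈ S, μ (B ∩ T i) := by
    rw [← hintegral, ← setLIntegral_const]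
    refine lintegral_mono_ae ?_
    filter_upwards [ae_restrict_mem hB, ae_restrict_of_ae hp] with x hxB hpx using h x hxB hpx
  have hupper : ∑ i ∈ S, μ (B ∩ T i) < #S * (c * μ B) := by
    simpa using ENNReal.sum_lt_sum_of_nonempty hS hc
  exact (hlower.trans_lt hupper).ne (by ring)

theorem ae_mem_measSupport {n : ℕ} (μ : Measure (EuclideanSpace ℝ (Fin n))) :
    ∀ᵐ x ∂μ, x ∈ measSupport μ := by
  refine measure_null_of_locally_null _ fun x hx => ?_
  obtain ⟨ρ, hρ, hnull⟩ : ∃ ρ, 0 < ρ ∧ μ (ball x ρ) = 0 := by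
    simpa [measSupport, pos_iff_ne_zero] using hx
  exact ⟨ball x ρ, mem_nhdsWithin_of_mem_nhds (ball_mem_nhds x hρ), hnull⟩

section Escape

variable {n : ℕ} {μ : Measure (EuclideanSpace ℝ (Fin n))} {C γ ρ₀ α : ℝ} {ι : Type*}
  {L : ι → Set (EuclideanSpace ℝ (Fin n))}

variable (μ α L) in
open Classical in
def IsEscapeMove (q ρ : ℝ) (z : EuclideanSpace ℝ (Fin n)) (S : Finset ι)
    (y : EuclideanSpace ℝ (Fin n)) : Prop :=
  y ∈ measSupport μ ∧ dist y z ≤ (1 - α) * ρ ∧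
    (#{i ∈ S | y ∈ cthickening (2 * (α * ρ)) (L i)} : ℝ) ≤ q * #S

theorem exists_isEscapeMove (hμ : AbsolutelyDecaying μ C γ ρ₀) (hα : 0 < α) (hα1 : α < 1)
    (hL : ∀ i, IsAffineHyperplane (L i)) {z : EuclideanSpace ℝ (Fin n)}
    (hz : z ∈ measSupport μ) {ρ : ℝ} (hρ : 0 < ρ) (hρ₀ : ρ < ρ₀) (S : Finset ι) :
    ∃ y, IsEscapeMove μ α L (C * (2 * α / (1 - α)) ^ γ) ρ z S y := by
  classical
  have hρ' : 0 < (1 - α) * ρ := mul_pos (sub_pos.2 hα1) hρ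
  obtain rfl | hS := S.eq_empty_or_nonempty
  · exact ⟨z, hz, by simpa using hρ'.le, by simp⟩
  have hratio : 2 * (α * ρ) / ((1 - α) * ρ) = 2 * α / (1 - α) := by
    field_simp
  obtain ⟨y, hyB, hy, hcard⟩ := exists_mem_card_filter_mem_lt measurableSet_closedBall
    (ae_mem_measSupport μ) (fun i => isClosed_cthickening.measurableSet) hS
    fun i _ => by
      simpa only [hratio] using
        hμ (L i) (hL i) z hz _ hρ' (by nlinarith) (2 * (α * ρ)) (by positivity)
  refine ⟨y, hy, mem_closedBall.1 hyB, le_of_lt ?_⟩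
  rwa [← ENNReal.ofReal_natCast, ← ENNReal.ofReal_natCast, ← ENNReal.ofReal_mul'
    (Nat.cast_nonneg _), ENNReal.ofReal_lt_ofReal_iff_of_nonneg (Nat.cast_nonneg _)] at hcard

variable (μ α L) in
noncomputable def escapeMove (q ρ : ℝ) (z : EuclideanSpace ℝ (Fin n)) (S : Finset ι) :
    EuclideanSpace ℝ (Fin n) :=
  Classical.epsilon (IsEscapeMove μ α L q ρ z S)

theorem isEscapeMove_escapeMove (hμ : AbsolutelyDecaying μ C γ ρ₀) (hα : 0 < α) (hα1 : α < 1)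
    (hL : ∀ i, IsAffineHyperplane (L i)) {z : EuclideanSpace ℝ (Fin n)}
    (hz : z ∈ measSupport μ) {ρ : ℝ} (hρ : 0 < ρ) (hρ₀ : ρ < ρ₀) (S : Finset ι) :
    IsEscapeMove μ α L (C * (2 * α / (1 - α)) ^ γ) ρ z S
      (escapeMove μ α L (C * (2 * α / (1 - α)) ^ γ) ρ z S) :=
  Classical.epsilon_spec (exists_isEscapeMove hμ hα hα1 hL hz hρ hρ₀ S)

end Escape

section Game

variable {X ι : Type*} [Fintype ι] (move : ℕ → X → Finset ι → X) (hit : ℕ → X → ι → Prop)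

/- In round `k`, with the adversary's centre `z` and the hyperplanes indexed by `S` not yet
escaped, Alice plays `move k z S`; `hit k y i` says that a centre `y` fails to escape hyperplane
`i` in round `k`. -/
noncomputable def survivors (c : ℕ → X) : ℕ → Finset ι
  | 0 => Finset.univ
  | k + 1 =>
    open Classical in {i ∈ survivors c k | hit k (move k (c k) (survivors c k)) i}

noncomputable def reply (c : ℕ → X) (k : ℕ) : X :=
  move k (c k) (survivors move hit c k)

variable {move hit}

theorem survivors_congr {c c' : ℕ → X} {k : ℕ} (h : ∀ j < k, c j = c' j) :
    survivors move hit c k = survivors move hit c' k := by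
  induction k with
  | zero => rfl
  | succ k ih =>
    rw [survivors, survivors, h k k.lt_succ_self, ih fun j hj => h j (hj.trans k.lt_succ_self)]

theorem reply_congr {c c' : ℕ → X} {k : ℕ} (h : ∀ j ≤ k, c j = c' j) :
    reply move hit c k = reply move hit c' k := by
  rw [reply, reply, h k le_rfl, survivors_congr fun j hj => h j hj.le]

theorem exists_lt_not_hit_of_notMem_survivors {c : ℕ → X} {k : ℕ} {i : ι}
    (hi : i ∉ survivors move hit c k) : ∃ j < k, ¬ hit j (reply move hit c j) i := by
  induction k with
  | zero => exact absurd (Finset.mem_univ i) hi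
  | succ k ih =>
    by_cases hik : i ∈ survivors move hit c k
    · refine ⟨k, k.lt_succ_self, fun hhit => hi ?_⟩
      classical
      exact Finset.mem_filter.2 ⟨hik, hhit⟩
    · obtain ⟨j, hj, hnot⟩ := ih hik
      exact ⟨j, hj.trans k.lt_succ_self, hnot⟩

open Classical in
theorem exists_lt_not_hit_of_pow_mul_card_lt_one {c : ℕ → X} {q : ℝ} (hq : 0 ≤ q)
    (hround : ∀ k, (#{i ∈ survivors move hit c k | hit k (reply move hit c k) i} : ℝ) ≤
      q * #(survivors move hit c k))
    {r : ℕ} (hr : q ^ r * Fintype.card ι < 1) (i : ι) :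
    ∃ j < r, ¬ hit j (reply move hit c j) i := by
  have hcard : (#(survivors move hit c r) : ℝ) ≤ q ^ r * Fintype.card ι :=
    le_geom (u := fun k => (#(survivors move hit c k) : ℝ)) hq r fun k _ => hround k
  have hempty : survivors move hit c r = ∅ := by
    rw [← Finset.card_eq_zero]
    exact_mod_cast Nat.lt_one_iff.1 (by exact_mod_cast hcard.trans_lt hr)
  exact exists_lt_not_hit_of_notMem_survivors (hempty ▸ Finset.notMem_empty i)

end Game

theorem closedBall_inter_cthickening_eq_empty_s19 {X : Type*} [PseudoMetricSpace X] {y : X}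
    {δ : ℝ} (hδ : 0 ≤ δ) {s : Set X} (hy : y ∉ cthickening (2 * δ) s) :
    closedBall y δ ∩ cthickening δ s = ∅ := by
  refine eq_empty_iff_forall_notMem.2 fun w ⟨hw, hws⟩ => hy ?_
  rw [two_mul]
  exact cthickening_cthickening_subset hδ hδ s
    (mem_cthickening_of_dist_le y w δ _ hws (mem_closedBall'.1 hw))

theorem subset_of_le_of_succ_subset {X : Type*} {A : ℕ → Set X} {r : ℕ}
    (h : ∀ k, k + 1 < r → A (k + 1) ⊆ A k) {j k : ℕ} (hjk : j ≤ k) (hk : k < r) :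
    A k ⊆ A j := by
  induction k, hjk using Nat.le_induction with
  | base => exact subset_rfl
  | succ k hjk ih => exact (h k hk).trans (ih (k.lt_succ_self.trans hk))

theorem decay_factor_lt_one {C γ α : ℝ} (hC : 0 < C) (hγ : 0 < γ) (hα : 0 < α)
    (hα' : α < 1 / (2 * C ^ (1 / γ) + 1)) :
    α < 1 ∧ C * (2 * α / (1 - α)) ^ γ < 1 := by
  set s := C ^ (1 / γ)
  have hs : 0 < s := Real.rpow_pos_of_pos hC _
  have hαs : α * (2 * s + 1) < 1 := (lt_div_iff₀ (by positivity)).1 (by simpa using hα')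
  have hα1 : α < 1 := by nlinarith
  refine ⟨hα1, ?_⟩
  have hC_eq : s ^ γ = C := by simp only [s, one_div, Real.rpow_inv_rpow hC.le hγ.ne']
  rw [← hC_eq, ← Real.mul_rpow hs.le (by have := sub_pos.2 hα1; positivity)]
  refine Real.rpow_lt_one (by have := sub_pos.2 hα1; positivity) ?_ hγ
  rw [mul_div_assoc', div_lt_one (sub_pos.2 hα1)]
  linarith

theorem pow_floor_logb_add_one_mul_lt_one {q : ℝ} (hq0 : 0 < q) (hq1 : q < 1) (N : ℕ) :
    q ^ (⌊Real.logb (1 / q) N⌋₊ + 1) * N < 1 := by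
  obtain rfl | hN := N.eq_zero_or_pos
  · simp
  set m := ⌊Real.logb (1 / q) N⌋₊ + 1
  have hNm : (N : ℝ) < (1 / q) ^ m := by
    rw [← Real.rpow_natCast, ← Real.logb_lt_iff_lt_rpow (one_lt_one_div hq0 hq1)
      (by exact_mod_cast hN)]
    push_cast [m]
    exact Nat.lt_floor_add_one _
  calc q ^ m * N < q ^ m * (1 / q) ^ m := by gcongr
    _ = 1 := by rw [← mul_pow, mul_one_div_cancel hq0.ne', one_pow]

theorem exists_escape_strategy {n : ℕ} {μ : Measure (EuclideanSpace ℝ (Fin n))} {C γ ρ₀ : ℝ}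
    (hC : 0 ≤ C) (hμ : AbsolutelyDecaying μ C γ ρ₀) {α β : ℝ} (hα : 0 < α) (hα1 : α < 1)
    (hβ : 0 < β) (hβ1 : β ≤ 1) {ρ : ℝ} (hρ : 0 < ρ) (hρ₀ : ρ < ρ₀) {ι : Type*} [Fintype ι]
    {L : ι → Set (EuclideanSpace ℝ (Fin n))} (hL : ∀ i, IsAffineHyperplane (L i)) {r : ℕ}
    (hr : (C * (2 * α / (1 - α)) ^ γ) ^ r * Fintype.card ι < 1) :
    ∃ f : (ℕ → EuclideanSpace ℝ (Fin n)) → ℕ → EuclideanSpace ℝ (Fin n),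
      (∀ c c' : ℕ → EuclideanSpace ℝ (Fin n), ∀ k : ℕ,
        (∀ j ≤ k, c j = c' j) → f c k = f c' k) ∧
      ∀ c : ℕ → EuclideanSpace ℝ (Fin n),
        (∀ k, c k ∈ measSupport μ) →
        (∀ k, k + 1 < r →
          closedBall (c (k + 1)) ((α * β) ^ (k + 1) * ρ) ⊆
            closedBall (f c k) (α * (α * β) ^ k * ρ)) →
        ((∀ k, k < r → f c k ∈ measSupport μ ∧
            closedBall (f c k) (α * (α * β) ^ k * ρ) ⊆
              closedBall (c k) ((α * β) ^ k * ρ)) ∧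
          ∀ i, closedBall (f c (r - 1)) (α * (α * β) ^ (r - 1) * ρ) ∩
            cthickening (α * (α * β) ^ (r - 1) * ρ) (L i) = ∅) := by
  classical
  set q := C * (2 * α / (1 - α)) ^ γ
  have hq : 0 ≤ q := by have := sub_pos.2 hα1; positivity
  have hαβ : α * β ≤ 1 := by nlinarith
  let move k z S := escapeMove μ α L q ((α * β) ^ k * ρ) z S
  let hit k y i := y ∈ cthickening (2 * (α * ((α * β) ^ k * ρ))) (L i)
  refine ⟨reply move hit, fun c c' k h => reply_congr h, fun c hc hnest => ?_⟩
  have hspec (k : ℕ) : IsEscapeMove μ α L q ((α * β) ^ k * ρ) (c k) (survivors move hit c k)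
      (reply move hit c k) :=
    isEscapeMove_escapeMove hμ hα hα1 hL (hc k) (by positivity)
      ((mul_le_of_le_one_left hρ.le (pow_le_one₀ (by positivity) hαβ)).trans_lt hρ₀) _
  have hlegal k : closedBall (reply move hit c k) (α * (α * β) ^ k * ρ) ⊆
      closedBall (c k) ((α * β) ^ k * ρ) :=
    closedBall_subset_closedBall' (by linarith [(hspec k).2.1])
  refine ⟨fun k _ => ⟨(hspec k).1, hlegal k⟩, fun i => ?_⟩
  obtain ⟨j, hjr, hj⟩ := exists_lt_not_hit_of_pow_mul_card_lt_one hq (fun k => (hspec k).2.2) hr i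
  have hnested := subset_of_le_of_succ_subset
    (A := fun k => closedBall (reply move hit c k) (α * (α * β) ^ k * ρ))
    (fun k hk => (hlegal (k + 1)).trans (hnest k hk))
    (Nat.le_sub_one_of_lt hjr) (Nat.sub_one_lt_of_lt hjr)
  have hradius : α * (α * β) ^ (r - 1) * ρ ≤ α * (α * β) ^ j * ρ := by
    have := pow_le_pow_of_le_one (by positivity) hαβ (Nat.le_sub_one_of_lt hjr)
    gcongr α * ?_ * ρ
  refine subset_empty_iff.1 ?_
  exact (inter_subset_inter hnested (cthickening_mono hradius _)).trans
    (closedBall_inter_cthickening_eq_empty_s19 (by positivity) (by rwa [mul_assoc α])).subset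

theorem escape_all_hyperplanes_in_r_rounds_general {n : ℕ}
    (μ : Measure (EuclideanSpace ℝ (Fin n)))
    (C γ ρ₀ : ℝ) (hC : 0 < C) (hγ : 0 < γ)
    (hμ : AbsolutelyDecaying μ C γ ρ₀)
    (α : ℝ) (hα : 0 < α) (hα' : α < 1 / (2 * C ^ (1/γ) + 1))
    (ε : ℝ) (hε : ε = 1 - C * (2 * α / (1 - α)) ^ γ)
    (β : ℝ) (hβ : 0 < β) (hβ' : β < 1)
    (N : ℕ)
    (r : ℕ) (hr : r = ⌊Real.logb (1 / (1 - ε)) N⌋₊ + 1) :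
    (1 - ε) ^ r * N < 1 ∧
    ∀ (x : EuclideanSpace ℝ (Fin n)), x ∈ measSupport μ →
    ∀ ρ : ℝ, 0 < ρ → ρ < ρ₀ →
    ∀ L : Fin N → Set (EuclideanSpace ℝ (Fin n)),
      (∀ i, IsAffineHyperplane (L i)) →
    ∃ f : (ℕ → EuclideanSpace ℝ (Fin n)) → ℕ → EuclideanSpace ℝ (Fin n),
      -- the strategy is causal: it depends only on the adversary's past moves
      (∀ c c' : ℕ → EuclideanSpace ℝ (Fin n), ∀ k : ℕ,
        (∀ j ≤ k, c j = c' j) → f c k = f c' k) ∧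
      ∀ c : ℕ → EuclideanSpace ℝ (Fin n),
        c 0 = x →
        (∀ k, c k ∈ measSupport μ) →
        -- the adversary's `(k+1)`-st ball is (β-scaled and) inside Alice's `k`-th ball
        (∀ k, k + 1 < r →
          closedBall (c (k + 1)) ((α * β) ^ (k + 1) * ρ) ⊆
            closedBall (f c k) (α * (α * β) ^ k * ρ)) →
        -- Alice's moves stay in `K` and are legal (α-scaled nested balls) ...
        ((∀ k, k < r → f c k ∈ measSupport μ ∧
            closedBall (f c k) (α * (α * β) ^ k * ρ) ⊆
              closedBall (c k) ((α * β) ^ k * ρ)) ∧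
        -- ... and her final ball avoids the neighborhoods of all the hyperplanes
          ∀ i, closedBall (f c (r - 1)) (α * (α * β) ^ (r - 1) * ρ) ∩
            cthickening (α * (α * β) ^ (r - 1) * ρ) (L i) = ∅) := by
  obtain ⟨hα1, hq1⟩ := decay_factor_lt_one hC hγ hα hα'
  have h1ε : 1 - ε = C * (2 * α / (1 - α)) ^ γ := by rw [hε, sub_sub_cancel]
  have h1ε0 : 0 < 1 - ε := by rw [h1ε]; have := sub_pos.2 hα1; positivity
  have hrounds : (1 - ε) ^ r * N < 1 :=
    hr ▸ pow_floor_logb_add_one_mul_lt_one h1ε0 (h1ε ▸ hq1) N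
  refine ⟨hrounds, fun _ _ ρ hρ hρ₀ L hL => ?_⟩
  obtain ⟨f, hcausal, hwin⟩ := exists_escape_strategy hC.le hμ hα hα1 hβ hβ'.le hρ hρ₀ hL
    (r := r) (by simpa [h1ε] using hrounds)
  exact ⟨f, hcausal, fun c _ => hwin c⟩

/-- with `r = ⌊log_{1/(1-ε)} N⌋ + 1` one has `(1-ε)^r N < 1`, and
consequently, playing `r` rounds of the `(α,β)`-game on `K = supp μ` starting
from `B(x,ρ)`, Alice has a (causal) strategy whose moves stay in `K`, shrink
radii by `α` (while the adversary shrinks by `β`), and whose `r`-th ball is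
disjoint from the `α(αβ)^{r-1}ρ`-neighborhoods of all `N` given hyperplanes. -/
theorem escape_all_hyperplanes_in_r_rounds {n : ℕ}
    (μ : Measure (EuclideanSpace ℝ (Fin n))) [IsLocallyFiniteMeasure μ]
    (C γ ρ₀ : ℝ) (hC : 0 < C) (hγ : 0 < γ) (hρ₀ : 0 < ρ₀)
    (hμ : AbsolutelyDecaying μ C γ ρ₀)
    (α : ℝ) (hα : 0 < α) (hα' : α < 1 / (2 * C ^ (1/γ) + 1))
    (ε : ℝ) (hε : ε = 1 - C * (2 * α / (1 - α)) ^ γ)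
    (β : ℝ) (hβ : 0 < β) (hβ' : β < 1)
    (N : ℕ) (hN : 0 < N)
    (r : ℕ) (hr : r = ⌊Real.logb (1 / (1 - ε)) N⌋₊ + 1) :
    (1 - ε) ^ r * N < 1 ∧
    ∀ (x : EuclideanSpace ℝ (Fin n)), x ∈ measSupport μ →
    ∀ ρ : ℝ, 0 < ρ → ρ < ρ₀ →
    ∀ L : Fin N → Set (EuclideanSpace ℝ (Fin n)),
      (∀ i, IsAffineHyperplane (L i)) →
    ∃ f : (ℕ → EuclideanSpace ℝ (Fin n)) → ℕ → EuclideanSpace ℝ (Fin n),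
      -- the strategy is causal: it depends only on the adversary's past moves
      (∀ c c' : ℕ → EuclideanSpace ℝ (Fin n), ∀ k : ℕ,
        (∀ j ≤ k, c j = c' j) → f c k = f c' k) ∧
      ∀ c : ℕ → EuclideanSpace ℝ (Fin n),
        c 0 = x →
        (∀ k, c k ∈ measSupport μ) →
        -- the adversary's `(k+1)`-st ball is (β-scaled and) inside Alice's `k`-th ball
        (∀ k, k + 1 < r →
          closedBall (c (k + 1)) ((α * β) ^ (k + 1) * ρ) ⊆
            closedBall (f c k) (α * (α * β) ^ k * ρ)) →
        -- Alice's moves stay in `K` and are legal (α-scaled nested balls) ...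
        ((∀ k, k < r → f c k ∈ measSupport μ ∧
            closedBall (f c k) (α * (α * β) ^ k * ρ) ⊆
              closedBall (c k) ((α * β) ^ k * ρ)) ∧
        -- ... and her final ball avoids the neighborhoods of all the hyperplanes
          ∀ i, closedBall (f c (r - 1)) (α * (α * β) ^ (r - 1) * ρ) ∩
            cthickening (α * (α * β) ^ (r - 1) * ρ) (L i) = ∅) :=
  escape_all_hyperplanes_in_r_rounds_general μ C γ ρ₀ hC hγ hμ α hα hα' ε hε β hβ hβ' N r hr
end
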